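/- arXiv:1308.3771 — 2 statements merged into one kernel-verified Lean document; each statement's English description precedes it below -/
import Mathlib

section
/- Let U(x) = (1 + m/|x| + (m² - q²)/(4|x|²))^{1/2} on ℝ³ \ {0}, with m ≥ |q|. Then U satisfies Δ U = -(1/4) |E_δ|² U^{-3}, where E_δ = q ∇(1/|x|), i.e., |E_δ|² = q²/|x|⁴, and Δ is the Euclidean Laplacian. -/
/-!
Write `U = √f` with `f = 1 + m/s + c/(4s²)`, `c = m² - q²`. For any positive `f`, the radial
Laplacian `Δ = ∂² + (2/s)∂` satisfies `4 U³ ΔU = 2 f Δf - f'²`. Here `1 + m/s` is harmonic and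
`Δ(s⁻²) = 2 s⁻⁴`, so `Δf = c/(2s⁴)`, and the cross terms cancel in `2 f Δf - f'² = (c - m²)/s⁴`,
which is `-q²/s⁴`.
-/

/-- The Reissner–Nordström conformal factor in isotropic coordinates,
as a radial function of `s = |x|`. -/
noncomputable def rnU (m q : ℝ) : ℝ → ℝ :=
  fun s => Real.sqrt (1 + m / s + (m^2 - q^2) / (4 * s^2))

open Filter Topology

theorem deriv_deriv_sqrt_add_mul_deriv {f f' : ℝ → ℝ} {f'' x : ℝ} (k : ℝ)
    (hf : ∀ᶠ t in 𝓝 x, HasDerivAt f (f' t) t) (hf' : HasDerivAt f' f'' x) (hx : 0 < f x) :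
    deriv (deriv fun t => √(f t)) x + k * deriv (fun t => √(f t)) x
      = (2 * f x * (f'' + k * f' x) - f' x ^ 2) / (4 * √(f x) ^ 3) := by
  have hpos : ∀ᶠ t in 𝓝 x, 0 < f t :=
    continuousAt_const.eventually_lt hf.self_of_nhds.continuousAt hx
  have hderiv : deriv (fun t => √(f t)) =ᶠ[𝓝 x] fun t => f' t / (2 * √(f t)) := by
    filter_upwards [hf, hpos] with t hft ht using (hft.sqrt ht.ne').deriv
  have hroot : 0 < √(f x) := Real.sqrt_pos.2 hx
  have hquot := hf'.fun_div ((hf.self_of_nhds.sqrt hx.ne').const_mul 2) (by positivity)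
  rw [hderiv.deriv_eq, hderiv.eq_of_nhds, hquot.deriv]
  have hsq : √(f x) ^ 2 = f x := Real.sq_sqrt hx.le
  field_simp
  rw [hsq]
  ring

theorem hasDerivAt_one_add_div_add_div_sq (m c : ℝ) {t : ℝ} (ht : t ≠ 0) :
    HasDerivAt (fun t => 1 + m / t + c / (4 * t ^ 2)) (-(m / t ^ 2) - c / (2 * t ^ 3)) t := by
  have h := ((hasDerivAt_const t 1).add ((hasDerivAt_const t m).fun_div (hasDerivAt_id' t) ht)).add
    ((hasDerivAt_const t c).fun_div ((hasDerivAt_pow 2 t).const_mul 4) (by positivity))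
  refine h.congr_deriv ?_
  field_simp
  ring

theorem hasDerivAt_neg_div_sq_sub_div_cube (m c : ℝ) {t : ℝ} (ht : t ≠ 0) :
    HasDerivAt (fun t => -(m / t ^ 2) - c / (2 * t ^ 3)) (2 * m / t ^ 3 + 3 * c / (2 * t ^ 4)) t := by
  have h := ((hasDerivAt_const t m).fun_div (hasDerivAt_pow 2 t) (by positivity)).neg.sub
    ((hasDerivAt_const t c).fun_div ((hasDerivAt_pow 3 t).const_mul 2) (by positivity))
  refine h.congr_deriv ?_
  field_simp
  ring

theorem isotropic_potential_identity (m c : ℝ) {s : ℝ} (hs : s ≠ 0) :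
    2 * (1 + m / s + c / (4 * s ^ 2))
        * (2 * m / s ^ 3 + 3 * c / (2 * s ^ 4) + 2 / s * (-(m / s ^ 2) - c / (2 * s ^ 3)))
      - (-(m / s ^ 2) - c / (2 * s ^ 3)) ^ 2 = (c - m ^ 2) / s ^ 4 := by
  field_simp
  ring

theorem one_add_div_add_sub_sq_div_pos {m q s : ℝ} (hmq : |q| ≤ m) (hs : 0 < s) :
    0 < 1 + m / s + (m ^ 2 - q ^ 2) / (4 * s ^ 2) := by
  have hm : 0 ≤ m := (abs_nonneg q).trans hmq
  have hq : q ^ 2 ≤ m ^ 2 := sq_abs q ▸ pow_le_pow_left₀ (abs_nonneg q) hmq 2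
  have : 0 ≤ (m ^ 2 - q ^ 2) / (4 * s ^ 2) := div_nonneg (sub_nonneg.2 hq) (by positivity)
  positivity

/-- `U` solves the Lichnerowicz equation `Δ U = -(1/4)|E_δ|² U⁻³` with
`|E_δ|² = q²/s⁴`, where `Δ` is the Euclidean Laplacian acting on the radial
function `U(s)`, i.e. `ΔU = U'' + (2/s)U'`. -/
theorem rnU_solves_lichnerowicz (m q : ℝ) (hmq : |q| ≤ m) :
    ∀ s : ℝ, 0 < s →
      deriv (deriv (rnU m q)) s + (2 / s) * deriv (rnU m q) s
        = -(1/4) * (q^2 / s^4) * (rnU m q s)⁻¹ ^ 3 := by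
  intro s hs
  have hf : ∀ᶠ t in 𝓝 s, HasDerivAt (fun t => 1 + m / t + (m ^ 2 - q ^ 2) / (4 * t ^ 2))
      (-(m / t ^ 2) - (m ^ 2 - q ^ 2) / (2 * t ^ 3)) t :=
    (eventually_ne_nhds hs.ne').mono fun t ht => hasDerivAt_one_add_div_add_div_sq m _ ht
  unfold rnU
  rw [deriv_deriv_sqrt_add_mul_deriv _ hf (hasDerivAt_neg_div_sq_sub_div_cube m _ hs.ne')
      (one_add_div_add_sub_sq_div_pos hmq hs), isotropic_potential_identity m _ hs.ne']
  ring
end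

section
/- Let Û⁴(x) = e^{−4t} + e^{−2t}√((8/3)(α + q²/2))/|x| + α/|x|² + e^{2t}√((8/3)(α + q²/2))(α − q²)/(6|x|³) + e^{4t}(α − q²)²/(36|x|⁴) and Ũ²(x) = e^{−2t} + √(4e^{−4t}ρ² + q²)/|x| + e^{−2t}ρ²/|x|², where ρ = r(t) > 0, t ∈ ℝ, q ∈ ℝ. If α ≥ q² + 6 e^{−4t} ρ², then Û(x) ≥ Ũ(x) for all |x| ≥ ρ. -/
/-!
`Û⁴` is a perfect square: it equals `P²` with
`P = e^{-2t} + √((8/3)(α + q²/2)) / (2|x|) + e^{2t} (α - q²) / (6|x|²)`.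
Both `P` and `Ũ²` are quadratics in `1/|x|` with constant term `e^{-2t}`, and the hypothesis on
`α` is exactly what makes each of the two other coefficients of `P` dominate the corresponding one
of `Ũ²`. Hence `Ũ² ≤ Û²` for every `|x| > 0`.
-/

open Real

lemma quartic_eq_sq (a b T q α s : ℝ) (hab : a * b = 1) (hT : T ^ 2 = (8/3) * (α + q^2/2)) :
    a ^ 2 + a * T / s + α / s ^ 2 + b * T * (α - q^2) / (6 * s ^ 3)
        + b ^ 2 * (α - q^2) ^ 2 / (36 * s ^ 4)
      = (a + T / 2 / s + b * (α - q^2) / 6 / s ^ 2) ^ 2 := by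
  linear_combination (-1 / (4 * s ^ 2)) * hT - ((α - q^2) / (3 * s ^ 2)) * hab

lemma sqrt_le_half_sqrt {c q α : ℝ} (hc : 0 ≤ c) (h : q^2 + 6 * c ≤ α) :
    √(4 * c + q^2) ≤ √((8/3) * (α + q^2/2)) / 2 := by
  have hZ : 0 ≤ (8/3) * (α + q^2/2) := by nlinarith [sq_nonneg q]
  rw [sqrt_le_iff, div_pow, sq_sqrt hZ]
  exact ⟨by positivity, by linarith⟩

lemma exp_neg_two_mul_mul_le {t q ρ α : ℝ} (h : q^2 + 6 * exp (-4*t) * ρ^2 ≤ α) :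
    exp (-2*t) * ρ^2 ≤ exp (2*t) * (α - q^2) / 6 := by
  have hsplit : exp (-2*t) = exp (2*t) * exp (-4*t) := by rw [← exp_add]; ring_nf
  calc exp (-2*t) * ρ^2 = exp (2*t) * (6 * exp (-4*t) * ρ^2) / 6 := by rw [hsplit]; ring
    _ ≤ exp (2*t) * (α - q^2) / 6 := by gcongr; linarith

lemma sqrt_eq_rpow_sq_quarter {x : ℝ} (hx : 0 ≤ x) : √x = (x ^ 2) ^ ((1:ℝ)/4) := by
  rw [← rpow_natCast, ← rpow_mul hx, sqrt_eq_rpow]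
  norm_num

/-- Comparison of the explicit radial conformal factors `Û` and `Ũ` in the
exhaustion argument: if `α ≥ q² + 6 e^{-4t} ρ²`, then `Û ≥ Ũ` for `|x| ≥ ρ`. -/
theorem uhat_ge_utilde (t q ρ α : ℝ) (hρ : 0 < ρ)
    (hα : q^2 + 6 * Real.exp (-4*t) * ρ^2 ≤ α) :
    ∀ s : ℝ, ρ ≤ s →
      Real.sqrt (Real.exp (-2*t) + Real.sqrt (4 * Real.exp (-4*t) * ρ^2 + q^2) / s
          + Real.exp (-2*t) * ρ^2 / s^2)
        ≤ (Real.exp (-4*t)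
            + Real.exp (-2*t) * Real.sqrt ((8/3) * (α + q^2/2)) / s
            + α / s^2
            + Real.exp (2*t) * Real.sqrt ((8/3) * (α + q^2/2)) * (α - q^2) / (6 * s^3)
            + Real.exp (4*t) * (α - q^2)^2 / (36 * s^4)) ^ ((1:ℝ)/4) := by
  intro s hs
  have hs0 : 0 < s := hρ.trans_le hs
  have hαq : 0 ≤ α - q^2 := by nlinarith [exp_pos (-4*t), sq_nonneg ρ]
  have hexp_mul : exp (-2*t) * exp (2*t) = 1 := by rw [← exp_add]; simp
  have hexp₄ : exp (-4*t) = exp (-2*t) ^ 2 := by rw [sq, ← exp_add]; ring_nf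
  have hexp₄' : exp (4*t) = exp (2*t) ^ 2 := by rw [sq, ← exp_add]; ring_nf
  have hT : √((8/3) * (α + q^2/2)) ^ 2 = (8/3) * (α + q^2/2) :=
    sq_sqrt (by nlinarith [sq_nonneg q])
  have hS : √(4 * exp (-4*t) * ρ^2 + q^2) ≤ √((8/3) * (α + q^2/2)) / 2 := by
    simpa only [mul_assoc] using
      sqrt_le_half_sqrt (c := exp (-4*t) * ρ^2) (by positivity)
        (by simpa only [mul_assoc] using hα)
  calc _ ≤ √(exp (-2*t) + √((8/3) * (α + q^2/2)) / 2 / s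
              + exp (2*t) * (α - q^2) / 6 / s ^ 2) := by
        gcongr √(_ + ?_ / _ + ?_ / _)
        exact exp_neg_two_mul_mul_le hα
    _ = _ := by
      rw [sqrt_eq_rpow_sq_quarter (by positivity), hexp₄, hexp₄',
        quartic_eq_sq _ _ _ _ _ _ hexp_mul hT]
end
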